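/- arXiv:math/0702504 — 3 statements merged into one kernel-verified Lean document; each statement's English description precedes it below -/
import Mathlib

section
/- Conversely, if q ∈ k is a primitive t-th root of unity and either m = t, or char k = p > 0 and m = t·p^s, then [m choose k]_q = 0 for all 1 ≤ k < m. -/
/-- The Gaussian (q-)binomial coefficient `[m choose j]_q`, defined by the q-Pascal
recursion. -/
noncomputable def qBinom {K : Type*} [Field K] (q : K) : ℕ → ℕ → K
  | _, 0 => 1
  | 0, _ + 1 => 0
  | m + 1, j + 1 => qBinom q m j + q ^ (j + 1) * qBinom q m (j + 1)

/-! By the q-binomial theorem,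
`∏_{i<m} (1 - q^i X) = ∑_j (-1)^j q^(j choose 2) [m choose j]_q X^j`. If `q` is a
primitive `t`-th root of unity, the factors are `t`-periodic in `i` and
`∏_{i<t} (1 - q^i X) = 1 - X^t`, so for `m = t N` the product is `(1 - X^t)^N`. This is
`1 - X^m` when `N = 1`, and also when `N = p^s` in characteristic `p` (Frobenius), so the
coefficients of `X^j` with `0 < j < m` vanish. -/

open Polynomial Finset

section

variable {K : Type*} [Field K]

theorem qBinom_zero_right (q : K) (m : ℕ) : qBinom q m 0 = 1 := by
  cases m <;> rfl

theorem qBinom_zero_succ (q : K) (j : ℕ) : qBinom q 0 (j + 1) = 0 := rfl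

theorem qBinom_succ_succ (q : K) (m j : ℕ) :
    qBinom q (m + 1) (j + 1) = qBinom q m j + q ^ (j + 1) * qBinom q m (j + 1) := rfl

theorem coeff_prod_range_one_sub_C_mul_pow_mul_X (q c : K) (m j : ℕ) :
    (∏ i ∈ range m, (1 - C (c * q ^ i) * X)).coeff j =
      (-c) ^ j * q ^ j.choose 2 * qBinom q m j := by
  induction m generalizing c j with
  | zero => cases j <;> simp [qBinom_zero_right, qBinom_zero_succ, coeff_one]
  | succ m ih =>
    have hsplit : ∏ i ∈ range (m + 1), (1 - C (c * q ^ i) * X) =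
        (1 - C c * X) * ∏ i ∈ range m, (1 - C (c * q * q ^ i) * X) := by
      simp only [prod_range_succ', pow_succ, pow_zero, mul_one, mul_assoc, mul_comm q]
      ring
    rw [hsplit, sub_mul, one_mul, mul_assoc, coeff_sub, coeff_C_mul]
    cases j with
    | zero => simp only [ih, coeff_X_mul_zero, qBinom_zero_right]; ring
    | succ j =>
      rw [coeff_X_mul, ih, ih, qBinom_succ_succ, Nat.choose_succ_succ', Nat.choose_one_right]
      ring

end

theorem IsPrimitiveRoot.prod_range_one_sub_C_pow_mul_X {R : Type*} [CommRing R] [IsDomain R]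
    {q : R} {t : ℕ} (hq : IsPrimitiveRoot q t) (ht : 0 < t) :
    ∏ i ∈ range t, (1 - C (q ^ i) * X) = 1 - X ^ t := by
  -- factor `Y ^ t - X ^ t` over `R[X]` and evaluate at `Y = 1`
  have h := congrArg (eval 1) <|
    X_pow_sub_C_eq_prod (hq.map_of_injective C_injective) ht (α := (X : R[X])) rfl
  simpa [eval_prod] using h.symm

theorem IsPrimitiveRoot.prod_range_mul_one_sub_C_pow_mul_X {R : Type*} [CommRing R] [IsDomain R]
    {q : R} {t : ℕ} (hq : IsPrimitiveRoot q t) (ht : 0 < t) (N : ℕ) :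
    ∏ i ∈ range (t * N), (1 - C (q ^ i) * X) = (1 - X ^ t) ^ N := by
  induction N with
  | zero => simp
  | succ N ih =>
    rw [mul_add_one, prod_range_add, ih, pow_succ, ← hq.prod_range_one_sub_C_pow_mul_X ht]
    simp only [pow_add, pow_mul, hq.pow_eq_one, one_pow, one_mul]

/-- If `q` is a primitive `t`-th root of unity and either `m = t`, or
`char K = p > 0` and `m = t·p^s`, then `[m choose j]_q = 0` for all `1 ≤ j < m`. -/
theorem qBinom_vanishing_of_primitiveRoot {K : Type*} [Field K] (q : K) (t : ℕ)
    (hq : IsPrimitiveRoot q t) (m : ℕ)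
    (hm : m = t ∨ ∃ p s : ℕ, p.Prime ∧ CharP K p ∧ m = t * p ^ s) :
    ∀ j, 1 ≤ j → j < m → qBinom q m j = 0 := by
  intro j hj hjm
  obtain ⟨N, hmN, hpow⟩ : ∃ N, m = t * N ∧ ((1 : K[X]) - X ^ t) ^ N = 1 - X ^ m := by
    rcases hm with rfl | ⟨p, s, hp, hchar, rfl⟩
    · exact ⟨1, (mul_one m).symm, pow_one _⟩
    · have : Fact p.Prime := ⟨hp⟩
      exact ⟨p ^ s, rfl, by rw [sub_pow_char_pow, one_pow, ← pow_mul]⟩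
  have ht : 0 < t := Nat.pos_of_ne_zero fun h => by simp [h] at hmN; omega
  have hcoeff := coeff_prod_range_one_sub_C_mul_pow_mul_X q 1 m j
  simp only [one_mul] at hcoeff
  rw [hmN, hq.prod_range_mul_one_sub_C_pow_mul_X ht, hpow, ← hmN] at hcoeff
  have hzero : ((1 : K[X]) - X ^ m).coeff j = 0 := by
    simp [coeff_one, coeff_X_pow, hjm.ne, Nat.one_le_iff_ne_zero.mp hj]
  rw [hzero] at hcoeff
  simpa [hq.ne_zero ht.ne'] using hcoeff.symm
end

section
/- Every Lyndon word u of length at least 2 admits a factorization u = vw into Lyndon words v, w with v > w, and among all such factorizations there is one in which v has minimal length; this factorization (the Shirshov standard factorization) is the one used to define the unique standard bracketing of u. -/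
/-- Lexicographic order where a proper prefix is greater than the word itself. -/
def plex {X : Type*} [LinearOrder X] (u v : List X) : Prop :=
  (∃ w a b x y, a < b ∧ u = w ++ a :: x ∧ v = w ++ b :: y) ∨ (v <+: u ∧ v ≠ u)

/-- Lyndon (standard) words: `vw > wv` for every factorization into nonempty words. -/
def IsLyndon {X : Type*} [LinearOrder X] (u : List X) : Prop :=
  u ≠ [] ∧ ∀ v w : List X, v ≠ [] → w ≠ [] → u = v ++ w → plex (w ++ v) (v ++ w)

/-!
Take for `w` the `plex`-greatest proper suffix of the Lyndon word `u = v w`. Every proper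
suffix of `w` is a proper suffix of `u`, so `w` is greater than its proper suffixes, which
characterizes Lyndon words. If a proper suffix `s` of `v` were not below `v`, the comparison
of `s w < v w` would make `s` a prefix of `v = s z`, and then `w < z w`, against the choice
of `w`. Finally `w < u = v w` and `w` is not a border of `u`, so `w < v`. Minimality of `|v|`
is then a matter of well-ordering ℕ.
-/

open OrderDual

section Plex

variable {X : Type*} [LinearOrder X]

theorem not_plex_nil_left (v : List X) : ¬ plex [] v := by
  rintro (⟨w, a, b, x, y, -, h, -⟩ | ⟨h, hne⟩)
  · simp at h
  · exact hne (List.prefix_nil.mp h)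

theorem plex_nil_right {u : List X} (h : u ≠ []) : plex u [] :=
  Or.inr ⟨List.nil_prefix, fun he => h he.symm⟩

theorem plex_cons_cons_iff {a b : X} {x y : List X} :
    plex (a :: x) (b :: y) ↔ a < b ∨ a = b ∧ plex x y := by
  constructor
  · rintro (⟨w, c, d, x', y', hcd, h1, h2⟩ | ⟨h1, h2⟩)
    · cases w with
      | nil =>
        simp only [List.nil_append, List.cons.injEq] at h1 h2
        exact Or.inl (h1.1 ▸ h2.1 ▸ hcd)
      | cons e w' =>
        simp only [List.cons_append, List.cons.injEq] at h1 h2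
        exact Or.inr ⟨h1.1.trans h2.1.symm, Or.inl ⟨w', c, d, x', y', hcd, h1.2, h2.2⟩⟩
    · rw [List.cons_prefix_cons] at h1
      exact Or.inr ⟨h1.1.symm, Or.inr ⟨h1.2, fun he => h2 (by rw [h1.1, he])⟩⟩
  · rintro (hab | ⟨rfl, (⟨w, c, d, x', y', hcd, h1, h2⟩ | ⟨h1, h2⟩)⟩)
    · exact Or.inl ⟨[], a, b, x, y, hab, rfl, rfl⟩
    · exact Or.inl ⟨a :: w, c, d, x', y', hcd, by rw [h1]; rfl, by rw [h2]; rfl⟩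
    · exact Or.inr ⟨List.cons_prefix_cons.mpr ⟨rfl, h1⟩, by simpa using h2⟩

theorem plex_iff_map_toDual_lt {u v : List X} :
    plex u v ↔ v.map toDual < u.map toDual := by
  induction u generalizing v with
  | nil => simpa using not_plex_nil_left v
  | cons a x ih =>
    cases v with
    | nil => simpa using plex_nil_right (List.cons_ne_nil a x)
    | cons b y =>
      rw [plex_cons_cons_iff, List.map_cons, List.map_cons, List.cons_lt_cons_iff, ih,
        toDual_lt_toDual, toDual_inj, eq_comm]

theorem plex_asymm {u v : List X} (h : plex u v) : ¬ plex v u := by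
  rw [plex_iff_map_toDual_lt] at h ⊢
  exact h.not_gt

theorem plex_append_left_iff (s : List X) {x y : List X} :
    plex (s ++ x) (s ++ y) ↔ plex x y := by
  induction s with
  | nil => rfl
  | cons a s ih => simp [plex_cons_cons_iff, ih]

theorem plex_append_append {x y : List X} (h : plex x y) (hlen : x.length ≤ y.length)
    (r r' : List X) : plex (x ++ r) (y ++ r') := by
  induction x generalizing y with
  | nil => exact absurd h (not_plex_nil_left y)
  | cons a x ih =>
    cases y with
    | nil => simp at hlen
    | cons b y =>
      rw [List.cons_append, List.cons_append, plex_cons_cons_iff] at *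
      exact h.imp_right fun ⟨hab, h⟩ => ⟨hab, ih h (by simpa using hlen)⟩

theorem plex_or_prefix_of_plex_append {s v r r' : List X} (h : plex (s ++ r) (v ++ r')) :
    plex s v ∨ s <+: v := by
  induction s generalizing v with
  | nil => exact Or.inr List.nil_prefix
  | cons a s ih =>
    cases v with
    | nil => exact Or.inl (plex_nil_right (List.cons_ne_nil a s))
    | cons b v =>
      rw [List.cons_append, List.cons_append, plex_cons_cons_iff] at h
      rcases h with hab | ⟨rfl, h⟩
      · exact Or.inl (plex_cons_cons_iff.mpr (Or.inl hab))
      · exact (ih h).imp (fun h => plex_cons_cons_iff.mpr (Or.inr ⟨rfl, h⟩))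
          (List.cons_prefix_cons.mpr ⟨rfl, ·⟩)

end Plex

section Lyndon

variable {X : Type*} [LinearOrder X]

theorem IsLyndon.not_prefix_of_eq_append {u t s : List X} (hu : IsLyndon u) (ht : t ≠ [])
    (hs : s ≠ []) (h : u = t ++ s) : ¬ s <+: u := by
  rintro ⟨m, hm⟩
  have hlen : t.length = m.length := by
    have := congrArg List.length (h.symm.trans hm.symm)
    simp only [List.length_append] at this
    omega
  have hm_ne : m ≠ [] := by
    rw [← List.length_pos_iff, ← hlen]
    exact List.length_pos_iff.mpr ht
  have hms : plex (m ++ s) (s ++ m) := hu.2 s m hs hm_ne hm.symm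
  have hst : plex (s ++ t) (s ++ m) := hm ▸ h ▸ hu.2 t s ht hs h
  have hsm : plex (s ++ m) (m ++ s) :=
    hm ▸ h ▸ plex_append_append ((plex_append_left_iff s).mp hst) hlen.le s s
  exact plex_asymm hms hsm

theorem IsLyndon.plex_self_of_eq_append {u t s : List X} (hu : IsLyndon u) (ht : t ≠ [])
    (hs : s ≠ []) (h : u = t ++ s) : plex s u := by
  have hrot : plex (s ++ t) (u ++ []) := by simpa [h] using hu.2 t s ht hs h
  exact (plex_or_prefix_of_plex_append hrot).resolve_right (hu.not_prefix_of_eq_append ht hs h)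

theorem isLyndon_iff_forall_plex_suffix {u : List X} :
    IsLyndon u ↔ u ≠ [] ∧ ∀ t s : List X, t ≠ [] → s ≠ [] → u = t ++ s → plex s u := by
  refine ⟨fun hu => ⟨hu.1, fun t s => hu.plex_self_of_eq_append⟩, fun ⟨hne, hsuf⟩ => ⟨hne, ?_⟩⟩
  intro v w hv hw h
  have hlen : w.length ≤ u.length := by simp [h]
  simpa [h] using plex_append_append (hsuf v w hv hw h) hlen v []

theorem IsLyndon.plex_of_eq_append {u v w : List X} (hu : IsLyndon u) (hv : v ≠ [])
    (hw : w ≠ []) (h : u = v ++ w) : plex w v := by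
  have hwu : plex (w ++ []) (v ++ w) := by simpa [h] using hu.plex_self_of_eq_append hv hw h
  refine (plex_or_prefix_of_plex_append hwu).resolve_right fun hwv => ?_
  exact hu.not_prefix_of_eq_append hv hw h (hwv.trans (h ▸ List.prefix_append v w))

theorem exists_maximal_proper_suffix {u : List X} (hlen : 2 ≤ u.length) :
    ∃ v w : List X, u = v ++ w ∧ v ≠ [] ∧ w ≠ [] ∧
      ∀ t s : List X, t ≠ [] → s ≠ [] → u = t ++ s → s = w ∨ plex s w := by
  obtain ⟨i, hi, hmin⟩ := (Finset.Ioo 0 u.length).exists_min_image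
    (fun i => (u.drop i).map toDual) ⟨1, by simp; omega⟩
  rw [Finset.mem_Ioo] at hi
  refine ⟨u.take i, u.drop i, (List.take_append_drop i u).symm,
    List.ne_nil_of_length_pos (by simp; omega), List.ne_nil_of_length_pos (by simp; omega),
    fun t s ht hs h => ?_⟩
  have hsuf : s = u.drop t.length := by rw [h, List.drop_left]
  have htlen : t.length ∈ Finset.Ioo 0 u.length := by
    have := List.length_pos_iff.mpr hs
    simp [h, List.length_pos_iff.mpr ht, this]
  rcases (hmin _ htlen).eq_or_lt with heq | hlt
  · exact Or.inl (hsuf.trans (List.map_injective_iff.mpr toDual.injective heq).symm)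
  · exact Or.inr (plex_iff_map_toDual_lt.mpr (hsuf ▸ hlt))

theorem isLyndon_of_maximal_suffix {u v w : List X} (huvw : u = v ++ w) (hw : w ≠ [])
    (hmax : ∀ t s : List X, t ≠ [] → s ≠ [] → u = t ++ s → s = w ∨ plex s w) : IsLyndon w := by
  refine isLyndon_iff_forall_plex_suffix.mpr ⟨hw, fun t s ht hs h => ?_⟩
  refine (hmax (v ++ t) s (by simp [ht]) hs (by simp [huvw, h])).resolve_left fun hsw => ?_
  simp [← hsw] at h
  exact ht h

theorem IsLyndon.isLyndon_prefix_of_maximal_suffix {u v w : List X} (hu : IsLyndon u)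
    (huvw : u = v ++ w) (hv : v ≠ [])
    (hmax : ∀ t s : List X, t ≠ [] → s ≠ [] → u = t ++ s → s = w ∨ plex s w) : IsLyndon v := by
  refine isLyndon_iff_forall_plex_suffix.mpr ⟨hv, fun t s ht hs h => ?_⟩
  have hsw : plex (s ++ w) (v ++ w) :=
    huvw ▸ hu.plex_self_of_eq_append ht (by simp [hs]) (by simp [huvw, h])
  refine (plex_or_prefix_of_plex_append hsw).resolve_right ?_
  rintro ⟨z, rfl⟩
  have hz : z ≠ [] := by rintro rfl; simp at h; exact ht h
  have hzw : plex w (z ++ w) := (plex_append_left_iff s).mp (by simpa using hsw)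
  rcases hmax s (z ++ w) hs (by simp [hz]) (by simp [huvw]) with hzw' | hzw'
  · simp [hz] at hzw'
  · exact plex_asymm hzw hzw'

theorem IsLyndon.exists_append_eq_plex {u : List X} (hu : IsLyndon u) (hlen : 2 ≤ u.length) :
    ∃ v w : List X, u = v ++ w ∧ IsLyndon v ∧ IsLyndon w ∧ plex w v := by
  obtain ⟨v, w, huvw, hv, hw, hmax⟩ := exists_maximal_proper_suffix hlen
  exact ⟨v, w, huvw, hu.isLyndon_prefix_of_maximal_suffix huvw hv hmax,
    isLyndon_of_maximal_suffix huvw hw hmax, hu.plex_of_eq_append hv hw huvw⟩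

end Lyndon

/-- Every Lyndon word of length at least 2 factors as `u = vw` with `v, w` Lyndon and
`v > w`, and among all such factorizations there is one in which `v` has minimal
length (the Shirshov standard factorization, used to define the standard bracketing). -/
theorem shirshov_factorization {X : Type*} [LinearOrder X] (u : List X)
    (hu : IsLyndon u) (hlen : 2 ≤ u.length) :
    ∃ v w : List X, u = v ++ w ∧ IsLyndon v ∧ IsLyndon w ∧ plex w v ∧
      ∀ v' w' : List X, u = v' ++ w' → IsLyndon v' → IsLyndon w' → plex w' v' →
        v.length ≤ v'.length := by
  classical
  let IsFactorLength (k : ℕ) : Prop :=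
    ∃ v w : List X, u = v ++ w ∧ IsLyndon v ∧ IsLyndon w ∧ plex w v ∧ v.length = k
  have hex : ∃ k, IsFactorLength k := by
    obtain ⟨v, w, huvw, hv, hw, hwv⟩ := hu.exists_append_eq_plex hlen
    exact ⟨_, v, w, huvw, hv, hw, hwv, rfl⟩
  obtain ⟨v, w, huvw, hv, hw, hwv, hk⟩ := Nat.find_spec hex
  exact ⟨v, w, huvw, hv, hw, hwv, fun v' w' h1 h2 h3 h4 =>
    hk ▸ Nat.find_min' hex ⟨v', w', h1, h2, h3, h4, rfl⟩⟩
end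

section
/- (Replacement of PBW-generators by thin elements.) Let S be an algebra with PBW-generators V over a subalgebra A (with 1 among the basis elements of A), and let ≺ be a complete monoidal order on words in V compatible with the PBW-decomposition. Let T ⊆ S be a set of thin elements — elements of the form c = v^m + Σ α_{ij} a_j W_i with all W_i ≺ v^m and m dividing h(v) (or h(v) = ∞) — such that for each v ∈ V at most one c_v ∈ T has leading term a power of v. Then the set P_T, obtained by replacing each such v by c_v (keeping v alongside c_v when m > 1), with heights h_{P_T}(v) = m and h_{P_T}(c_v) = h(v)/m (and h_{P_T}(c_v) = h(v) when m = 1), is again a set of PBW-generators of S over A. -/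
/-! Each new generator `x` (an old `v`, or a thin element `c_v`) equals `v ^ wt x`, with `wt x`
equal to `1` or `m_v`, modulo the span of basis vectors with smaller words. By compatibility and
monoidality these congruences multiply, and since `c_v` is ordered just before `v` the expanded
word stays monotone: a monotone product of new generators with exponents `g` is the old
PBW-monomial in which `v` has exponent `g v + g c_v · m_v`, up to smaller words. Division with
remainder by `m_v`, together with `m_v ∣ h v`, makes this exponent map a bijection between
restricted exponent functions, so the new PBW-family is unitriangular with respect to the old
PBW-basis, hence a basis. -/

open scoped Classical

/-- The product `v₁^{n₁} ⋯ v_k^{n_k}` associated to an exponent function `f`,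
factors in increasing order. -/
noncomputable def pbwProd {S V : Type*} [Monoid S] [LinearOrder V]
    (emb : V → S) (f : V →₀ ℕ) : S :=
  ((f.support.sort (· ≤ ·)).map fun v => emb v ^ f v).prod

/-- Exponents strictly below the height function. -/
def Restricted {V : Type*} (h : V → ℕ∞) (f : V →₀ ℕ) : Prop :=
  ∀ v, (f v : ℕ∞) < h v

/-- The family of monotone restricted products `a_j · v₁^{n₁} ⋯ v_k^{n_k}`. -/
noncomputable def pbwFam {S J V : Type*} [Monoid S] [LinearOrder V]
    (a : J → S) (emb : V → S) (h : V → ℕ∞) :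
    J × {f : V →₀ ℕ // Restricted h f} → S :=
  fun p => a p.1 * pbwProd emb p.2.1

/-- `V` is a set of PBW-generators of `S` over the subspace with basis `a : J → S`. -/
def IsPBWBasis (k : Type*) {S J V : Type*} [Field k] [Ring S] [Algebra k S]
    [LinearOrder V] (a : J → S) (emb : V → S) (h : V → ℕ∞) : Prop :=
  LinearIndependent k (pbwFam a emb h) ∧
    Submodule.span k (Set.range (pbwFam a emb h)) = ⊤

/-- The monotone word `v₁^{n₁} ⋯ v_k^{n_k}` in the free monoid on `V` associated to an
exponent function. -/
noncomputable def toWord {V : Type*} [LinearOrder V] (f : V →₀ ℕ) : List V :=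
  ((f.support.sort (· ≤ ·)).map fun v => List.replicate (f v) v).flatten

/-- `m` is the leading word of `s` with respect to the PBW-basis `B` and the word
order `ord`: `m` occurs among the words of the PBW-decomposition of `s`, and no word
of the decomposition is `ord`-greater than `m`. -/
def IsLeadingWord {k S J V : Type*} [Field k] [Ring S] [Algebra k S] [LinearOrder V]
    {h : V → ℕ∞} (ord : List V → List V → Prop)
    (B : Module.Basis (J × {f : V →₀ ℕ // Restricted h f}) k S) (s : S) (m : List V) : Prop :=
  (∃ p ∈ (B.repr s).support, toWord (p.2 : V →₀ ℕ) = m) ∧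
    ∀ p ∈ (B.repr s).support, ¬ ord m (toWord (p.2 : V →₀ ℕ))

/-- Division of an extended natural number by a natural number (`⊤ / m = ⊤`). -/
noncomputable def edivE (x : ℕ∞) (m : ℕ) : ℕ∞ :=
  match x with
  | ⊤ => ⊤
  | (n : ℕ) => ((n / m : ℕ) : ℕ∞)

section Words

variable {V : Type*} [LinearOrder V]

lemma Finset.sum_map_sort {M : Type*} [AddCommMonoid M] (s : Finset V) (g : V → M) :
    ((s.sort (· ≤ ·)).map g).sum = ∑ x ∈ s, g x := by
  rw [Finset.sum_eq_multiset_sum, ← Finset.sort_eq s (· ≤ ·), Multiset.map_coe,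
    Multiset.sum_coe]

lemma count_toWord (f : V →₀ ℕ) (v : V) : (toWord f).count v = f v := by
  rw [toWord, List.count_flatten, List.map_map, Finset.sum_map_sort]
  simpa [List.count_replicate] using Eq.symm

lemma toWord_sorted (f : V →₀ ℕ) : (toWord f).Pairwise (· ≤ ·) := by
  rw [toWord, List.pairwise_flatten, List.pairwise_map]
  refine ⟨fun l hl => ?_, (f.support.pairwise_sort (· ≤ ·)).imp fun hvw u hu w hw => ?_⟩
  · obtain ⟨w, -, rfl⟩ := List.mem_map.mp hl
    exact List.pairwise_replicate.2 (Or.inr le_rfl)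
  · rwa [List.eq_of_mem_replicate hu, List.eq_of_mem_replicate hw]

lemma pbwProd_eq_prod_toWord {S : Type*} [Monoid S] (emb : V → S) (f : V →₀ ℕ) :
    pbwProd emb f = ((toWord f).map emb).prod := by
  simp [toWord, pbwProd, List.map_flatten, List.prod_flatten, Function.comp_def,
    List.prod_replicate]

end Words

lemma Finset.exists_max_image_of_isStrictTotalOrder {α β : Type*} (r : α → α → Prop)
    [IsStrictTotalOrder α r] (s : Finset β) (f : β → α) (hs : s.Nonempty) :
    ∃ x ∈ s, ∀ y ∈ s, ¬ r (f x) (f y) := by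
  let := linearOrderOfSTO r
  obtain ⟨x, hx, hmax⟩ := s.exists_max_image f hs
  exact ⟨x, hx, fun y hy => not_lt_of_ge (hmax y hy)⟩

namespace Module.Basis

variable {R M I ι α : Type*} [Ring R] [AddCommGroup M] [Module R M]
  (B : Basis I R M) (deg : I → α)

def spanBelow (r : α → α → Prop) (u : α) : Submodule R M :=
  Submodule.span R (B '' {p | r (deg p) u})

variable {B deg}

lemma spanBelow_mono {r r' : α → α → Prop} {u u' : α} (h : ∀ x, r x u → r' x u') :
    B.spanBelow deg r u ≤ B.spanBelow deg r' u' :=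
  Submodule.span_mono (Set.image_mono fun _ hp => h _ hp)

lemma repr_apply_eq_of_sub_mem_spanBelow {r : α → α → Prop} {x : M} {p q : I}
    (hx : x - B p ∈ B.spanBelow deg r (deg p)) (hq : ¬ r (deg q) (deg p)) :
    B.repr x q = Finsupp.single p 1 q := by
  have hzero : B.repr (x - B p) q = 0 :=
    Finsupp.notMem_support_iff.mp fun hmem => hq (B.mem_span_image.mp hx hmem)
  rwa [map_sub, B.repr_self, Finsupp.sub_apply, sub_eq_zero] at hzero

theorem linearIndependent_of_sub_mem_spanBelow {r : α → α → Prop} [IsStrictTotalOrder α r]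
    {F : ι → M} {D : ι → I} (hD : Function.Injective D)
    (hF : ∀ i, F i - B (D i) ∈ B.spanBelow deg r (deg (D i))) : LinearIndependent R F := by
  rw [linearIndependent_iff]
  intro l hl
  by_contra hne
  obtain ⟨i, hi, hmax⟩ := Finset.exists_max_image_of_isStrictTotalOrder r l.support
    (deg ∘ D) (Finsupp.support_nonempty_iff.mpr hne)
  have hcoeff : B.repr (Finsupp.linearCombination R F l) (D i) = l i := by
    rw [Finsupp.linearCombination_apply, Finsupp.sum, map_sum, Finset.sum_apply']
    simp_rw [map_smul, Finsupp.smul_apply]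
    rw [Finset.sum_congr rfl fun i' hi' => by
      rw [repr_apply_eq_of_sub_mem_spanBelow (hF i') (hmax i' hi'), Finsupp.single_apply,
        hD.eq_iff]]
    simp [Finsupp.mem_support_iff.mp hi]
  exact Finsupp.mem_support_iff.mp hi (by simpa [hl] using hcoeff.symm)

theorem span_eq_top_of_sub_mem_spanBelow {r : α → α → Prop} [IsWellFounded α r]
    {F : ι → M} {D : ι → I} (hD : Function.Surjective D)
    (hF : ∀ i, F i - B (D i) ∈ B.spanBelow deg r (deg (D i))) :
    Submodule.span R (Set.range F) = ⊤ := by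
  rw [eq_top_iff, ← B.span_eq, Submodule.span_le]
  rintro - ⟨p, rfl⟩
  refine (InvImage.wf deg (IsWellFounded.wf : WellFounded r)).induction
    (C := fun p => B p ∈ Submodule.span R (Set.range F)) p fun p ih => ?_
  obtain ⟨i, rfl⟩ := hD p
  have hlower : B.spanBelow deg r (deg (D i)) ≤ Submodule.span R (Set.range F) :=
    Submodule.span_le.mpr fun _ ⟨q, hq, hBq⟩ => hBq ▸ ih q hq
  rw [← sub_sub_cancel (F i) (B (D i))]
  exact sub_mem (Submodule.subset_span ⟨i, rfl⟩) (hlower (hF i))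

end Module.Basis

lemma Module.Basis.mul_mem_of_basis_mul_mem {R A I α : Type*} [CommRing R] [Ring A]
    [Algebra R A] {B : Module.Basis I R A} {deg : I → α} {r₁ r₂ : α → α → Prop} {u v : α}
    {N : Submodule R A} (hcore : ∀ p q, r₁ (deg p) u → r₂ (deg q) v → B p * B q ∈ N)
    {s t : A} (hs : s ∈ B.spanBelow deg r₁ u) (ht : t ∈ B.spanBelow deg r₂ v) : s * t ∈ N := by
  have hst := Submodule.mul_mem_mul hs ht
  rw [Module.Basis.spanBelow, Module.Basis.spanBelow, Submodule.span_mul_span] at hst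
  refine Submodule.span_le.mpr (Set.mul_subset_iff.mpr ?_) hst
  rintro - ⟨p, hp, rfl⟩ - ⟨q, hq, rfl⟩
  exact hcore p q hp hq

lemma Relation.ReflGen.trans_rel {α : Type*} {r : α → α → Prop} [IsTrans α r] {a b c : α}
    (hab : Relation.ReflGen r a b) (hbc : r b c) : r a c := by
  cases hab with
  | refl => exact hbc
  | single hab => exact _root_.trans hab hbc

lemma Relation.reflGen_of_not_rel {α : Type*} {r : α → α → Prop} [Std.Trichotomous r]
    {a b : α} (h : ¬ r b a) : Relation.ReflGen r a b := by
  rcases trichotomous_of r a b with hab | rfl | hba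
  · exact .single hab
  · exact .refl
  · exact absurd hba h

open Relation

section Monoidal

variable {V : Type*}

def IsMonoidalOrder (ord : List V → List V → Prop) : Prop :=
  ∀ u v c d : List V, ord u v → ord (c ++ u ++ d) (c ++ v ++ d)

variable {ord : List V → List V → Prop} [IsTrans (List V) ord]

lemma IsMonoidalOrder.append_of_reflGen_of_rel (hmon : IsMonoidalOrder ord)
    {u u' v v' : List V} (hu : ReflGen ord u u') (hv : ord v v') : ord (u ++ v) (u' ++ v') := by
  have hright : ord (u' ++ v) (u' ++ v') := by simpa using hmon v v' u' [] hv
  cases hu with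
  | refl => exact hright
  | single hu => exact _root_.trans (by simpa using hmon u u' [] v hu) hright

lemma IsMonoidalOrder.append_of_rel_of_reflGen (hmon : IsMonoidalOrder ord)
    {u u' v v' : List V} (hu : ord u u') (hv : ReflGen ord v v') : ord (u ++ v) (u' ++ v') := by
  have hleft : ord (u ++ v) (u' ++ v) := by simpa using hmon u u' [] v hu
  cases hv with
  | refl => exact hleft
  | single hv => exact _root_.trans hleft (by simpa using hmon v v' u' [] hv)

end Monoidal

section Compatibility

variable {k S J V : Type*} [Field k] [Ring S] [Algebra k S] [LinearOrder V] {h : V → ℕ∞}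

noncomputable def pbwWord (p : J × {f : V →₀ ℕ // Restricted h f}) : List V := toWord p.2.1

def IsCompatibleOrder (ord : List V → List V → Prop) (a : J → S) (emb : V → S)
    (B : Module.Basis (J × {f : V →₀ ℕ // Restricted h f}) k S) : Prop :=
  ∀ (l : List (J ⊕ V)) (m : List V),
    IsLeadingWord ord B ((l.map (Sum.elim a emb)).prod) m →
    ¬ ord (l.filterMap fun x => x.elim (fun _ => none) some) m

variable {a : J → S} {emb : V → S} {ord : List V → List V → Prop} [IsWellOrder (List V) ord]
  {B : Module.Basis (J × {f : V →₀ ℕ // Restricted h f}) k S}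

lemma exists_isLeadingWord {s : S} (hs : s ≠ 0) : ∃ m, IsLeadingWord ord B s m := by
  obtain ⟨p, hp, hmax⟩ := Finset.exists_max_image_of_isStrictTotalOrder ord (B.repr s).support
    pbwWord (by simpa using hs)
  exact ⟨pbwWord p, ⟨p, hp, rfl⟩, hmax⟩

lemma IsLeadingWord.mem_spanBelow {s : S} {m : List V} (hm : IsLeadingWord ord B s m) :
    s ∈ B.spanBelow pbwWord (ReflGen ord) m :=
  B.mem_span_image.mpr fun p hp => reflGen_of_not_rel (hm.2 p hp)

lemma IsCompatibleOrder.prod_mem_spanBelow (hcompat : IsCompatibleOrder ord a emb B)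
    (l : List (J ⊕ V)) :
    (l.map (Sum.elim a emb)).prod ∈
      B.spanBelow pbwWord (ReflGen ord) (l.filterMap fun x => x.elim (fun _ => none) some) := by
  by_cases hs : (l.map (Sum.elim a emb)).prod = 0
  · rw [hs]
    exact zero_mem _
  obtain ⟨m, hm⟩ := exists_isLeadingWord (ord := ord) (B := B) hs
  exact B.spanBelow_mono (fun x hx => _root_.trans hx (reflGen_of_not_rel (hcompat l m hm)))
    hm.mem_spanBelow

lemma IsCompatibleOrder.mem_spanBelow_nil (hcompat : IsCompatibleOrder ord a emb B) (j : J) :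
    a j ∈ B.spanBelow pbwWord (ReflGen ord) [] := by
  simpa [List.filterMap_cons] using hcompat.prod_mem_spanBelow [Sum.inl j]

lemma IsCompatibleOrder.word_prod_mem_spanBelow (hcompat : IsCompatibleOrder ord a emb B)
    (w : List V) :
    (w.map emb).prod ∈ B.spanBelow pbwWord (ReflGen ord) w := by
  simpa [List.filterMap_map, List.map_map] using hcompat.prod_mem_spanBelow (w.map .inr)

lemma IsCompatibleOrder.basis_mul_basis_mem (hcompat : IsCompatibleOrder ord a emb B)
    (hB : ∀ p, B p = pbwFam a emb h p)
    (p q : J × {f : V →₀ ℕ // Restricted h f}) :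
    B p * B q ∈ B.spanBelow pbwWord (ReflGen ord) (pbwWord p ++ pbwWord q) := by
  have hprod := hcompat.prod_mem_spanBelow
    ((.inl p.1 :: (pbwWord p).map .inr) ++ (.inl q.1 :: (pbwWord q).map .inr))
  simpa [List.filterMap_cons, List.filterMap_map, List.map_map, hB, pbwFam,
    pbwProd_eq_prod_toWord, pbwWord, mul_assoc] using hprod

lemma IsCompatibleOrder.mul_mem_spanBelow_of_reflGen_of_rel
    (hcompat : IsCompatibleOrder ord a emb B) (hB : ∀ p, B p = pbwFam a emb h p)
    (hmon : IsMonoidalOrder ord) {s t : S} {u v : List V}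
    (hs : s ∈ B.spanBelow pbwWord (ReflGen ord) u) (ht : t ∈ B.spanBelow pbwWord ord v) :
    s * t ∈ B.spanBelow pbwWord ord (u ++ v) :=
  Module.Basis.mul_mem_of_basis_mul_mem (fun p q hp hq => B.spanBelow_mono
    (fun _ hx => hx.trans_rel (hmon.append_of_reflGen_of_rel hp hq))
    (hcompat.basis_mul_basis_mem hB p q)) hs ht

lemma IsCompatibleOrder.mul_mem_spanBelow_of_rel_of_reflGen
    (hcompat : IsCompatibleOrder ord a emb B) (hB : ∀ p, B p = pbwFam a emb h p)
    (hmon : IsMonoidalOrder ord) {s t : S} {u v : List V}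
    (hs : s ∈ B.spanBelow pbwWord ord u) (ht : t ∈ B.spanBelow pbwWord (ReflGen ord) v) :
    s * t ∈ B.spanBelow pbwWord ord (u ++ v) :=
  Module.Basis.mul_mem_of_basis_mul_mem (fun p q hp hq => B.spanBelow_mono
    (fun _ hx => hx.trans_rel (hmon.append_of_rel_of_reflGen hp hq))
    (hcompat.basis_mul_basis_mem hB p q)) hs ht

end Compatibility

section Expansion

variable {V V₂ : Type*} (π : V₂ → V) (wt : V₂ → ℕ)

def expandWord (L : List V₂) : List V := L.flatMap fun x => List.replicate (wt x) (π x)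

noncomputable def expandExp (g : V₂ →₀ ℕ) : V →₀ ℕ :=
  g.sum fun x n => Finsupp.single (π x) (n * wt x)

lemma expandExp_apply (g : V₂ →₀ ℕ) (v : V) :
    expandExp π wt g v = ∑ x ∈ g.support, Finsupp.single (π x) (g x * wt x) v :=
  Finsupp.sum_apply

variable [LinearOrder V] [LinearOrder V₂]

lemma sum_map_toWord {M : Type*} [AddCommMonoid M] (g : V₂ →₀ ℕ) (φ : V₂ → M) :
    ((toWord g).map φ).sum = ∑ x ∈ g.support, g x • φ x := by
  simp [toWord, List.map_flatten, List.sum_flatten, Function.comp_def, Finset.sum_map_sort]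

lemma count_expandWord_toWord (g : V₂ →₀ ℕ) (v : V) :
    (expandWord π wt (toWord g)).count v = expandExp π wt g v := by
  rw [expandWord, List.count_flatMap, expandExp_apply]
  simp only [Function.comp_def, List.count_replicate, beq_iff_eq, sum_map_toWord, smul_eq_mul,
    mul_ite, mul_zero, Finsupp.single_apply]

lemma expandWord_toWord {π : V₂ → V} (hπ : Monotone π) (g : V₂ →₀ ℕ) :
    expandWord π wt (toWord g) = toWord (expandExp π wt g) := by
  refine List.Perm.eq_of_pairwise' ?_ (toWord_sorted _)
    (List.perm_iff_count.2 fun v => by rw [count_toWord, count_expandWord_toWord])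
  rw [expandWord, List.pairwise_flatMap]
  refine ⟨fun x _ => List.pairwise_replicate.2 (Or.inr le_rfl),
    (toWord_sorted g).imp fun hxy u hu w hw => ?_⟩
  rw [List.eq_of_mem_replicate hu, List.eq_of_mem_replicate hw]
  exact hπ hxy

end Expansion

section Replacement

variable {k S J V V₂ : Type*} [Field k] [Ring S] [Algebra k S] [LinearOrder V]
  {h : V → ℕ∞} {h₂ : V₂ → ℕ∞} {a : J → S} {emb : V → S} {emb₂ : V₂ → S}
  {ord : List V → List V → Prop} [IsWellOrder (List V) ord]
  {B : Module.Basis (J × {f : V →₀ ℕ // Restricted h f}) k S}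
  {π : V₂ → V} {wt : V₂ → ℕ}

lemma prod_sub_prod_expandWord_mem (hcompat : IsCompatibleOrder ord a emb B)
    (hB : ∀ p, B p = pbwFam a emb h p) (hmon : IsMonoidalOrder ord)
    (hthin : ∀ x, emb₂ x - emb (π x) ^ wt x ∈
      B.spanBelow pbwWord ord (List.replicate (wt x) (π x))) (L : List V₂) :
    (L.map emb₂).prod - ((expandWord π wt L).map emb).prod ∈
      B.spanBelow pbwWord ord (expandWord π wt L) := by
  induction L with
  | nil => simp [expandWord]
  | cons x L ih =>
    set P := (L.map emb₂).prod
    set E := ((expandWord π wt L).map emb).prod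
    have hE := hcompat.word_prod_mem_spanBelow (expandWord π wt L)
    have hP : P ∈ B.spanBelow pbwWord (ReflGen ord) (expandWord π wt L) := by
      rw [← sub_add_cancel P E]
      exact add_mem (B.spanBelow_mono (fun _ => .single) ih) hE
    have hpow := hcompat.word_prod_mem_spanBelow (List.replicate (wt x) (π x))
    rw [List.map_replicate, List.prod_replicate] at hpow
    have hsplit : emb₂ x * P - emb (π x) ^ wt x * E =
        emb (π x) ^ wt x * (P - E) + (emb₂ x - emb (π x) ^ wt x) * P := by
      noncomm_ring
    rw [List.map_cons, List.prod_cons, show expandWord π wt (x :: L) =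
      List.replicate (wt x) (π x) ++ expandWord π wt L from List.flatMap_cons, List.map_append,
      List.prod_append, List.map_replicate, List.prod_replicate, hsplit]
    exact add_mem (hcompat.mul_mem_spanBelow_of_reflGen_of_rel hB hmon hpow ih)
      (hcompat.mul_mem_spanBelow_of_rel_of_reflGen hB hmon (hthin x) hP)

lemma pbwFam_sub_basis_mem (hcompat : IsCompatibleOrder ord a emb B)
    (hB : ∀ p, B p = pbwFam a emb h p) (hmon : IsMonoidalOrder ord)
    (hthin : ∀ x, emb₂ x - emb (π x) ^ wt x ∈
      B.spanBelow pbwWord ord (List.replicate (wt x) (π x)))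
    [LinearOrder V₂] (hπ : Monotone π) (j : J) (g : {g : V₂ →₀ ℕ // Restricted h₂ g})
    (hg : Restricted h (expandExp π wt g)) :
    pbwFam a emb₂ h₂ (j, g) - B (j, ⟨expandExp π wt g, hg⟩) ∈
      B.spanBelow pbwWord ord (toWord (expandExp π wt g)) := by
  have hprod := prod_sub_prod_expandWord_mem hcompat hB hmon hthin (toWord g.1)
  rw [expandWord_toWord wt hπ] at hprod
  have hmul := hcompat.mul_mem_spanBelow_of_reflGen_of_rel hB hmon
    (hcompat.mem_spanBelow_nil j) hprod
  rw [List.nil_append, mul_sub] at hmul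
  simpa only [hB, pbwFam, pbwProd_eq_prod_toWord] using hmul

theorem isPBWBasis_of_bijOn_expandExp (hcompat : IsCompatibleOrder ord a emb B)
    (hB : ∀ p, B p = pbwFam a emb h p) (hmon : IsMonoidalOrder ord)
    (hthin : ∀ x, emb₂ x - emb (π x) ^ wt x ∈
      B.spanBelow pbwWord ord (List.replicate (wt x) (π x)))
    [LinearOrder V₂] (hπ : Monotone π)
    (hbij : Set.BijOn (expandExp π wt) {g | Restricted h₂ g} {f | Restricted h f}) :
    IsPBWBasis k a emb₂ h₂ := by
  let D := Prod.map (id : J → J) (hbij.mapsTo.restrict _ _ _)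
  have hF : ∀ i, pbwFam a emb₂ h₂ i - B (D i) ∈ B.spanBelow pbwWord ord (pbwWord (D i)) :=
    fun i => pbwFam_sub_basis_mem hcompat hB hmon hthin hπ i.1 i.2 _
  have hD : Function.Bijective D := Function.bijective_id.prodMap hbij.bijective
  exact ⟨B.linearIndependent_of_sub_mem_spanBelow hD.1 hF,
    B.span_eq_top_of_sub_mem_spanBelow hD.2 hF⟩

end Replacement

lemma edivE_one (x : ℕ∞) : edivE x 1 = x := by
  induction x using ENat.recTopCoe with
  | top => rfl
  | coe n => simp [edivE]

lemma add_mul_lt_of_lt_edivE {H : ℕ∞} {m q r : ℕ} (hH : H = ⊤ ∨ ∃ n : ℕ, H = n ∧ m ∣ n)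
    (hr : r < m) (hq : (q : ℕ∞) < edivE H m) : ((r + q * m : ℕ) : ℕ∞) < H := by
  rcases hH with rfl | ⟨n, rfl, c, rfl⟩
  · exact ENat.natCast_lt_top _
  · have hqc : q + 1 ≤ c := by
      simpa [edivE, Nat.mul_div_cancel_left c (by omega : 0 < m)] using hq
    have : r + q * m < m * c := by nlinarith
    exact_mod_cast this

lemma div_lt_edivE {H : ℕ∞} {m f : ℕ} (hH : H = ⊤ ∨ ∃ n : ℕ, H = n ∧ m ∣ n)
    (hf : (f : ℕ∞) < H) : ((f / m : ℕ) : ℕ∞) < edivE H m := by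
  rcases hH with rfl | ⟨n, rfl, hmn⟩
  · exact ENat.natCast_lt_top _
  · show ((f / m : ℕ) : ℕ∞) < ((n / m : ℕ) : ℕ∞)
    exact_mod_cast Nat.div_lt_div_of_lt_of_dvd hmn (by exact_mod_cast hf)

lemma Finset.sum_single_val_apply {α M : Type*} [AddCommMonoid M] {P : α → Prop}
    (s : Finset (Subtype P)) (G : Subtype P → M) (hG : ∀ p ∉ s, G p = 0) (v : α) :
    ∑ p ∈ s, Finsupp.single p.1 (G p) v = if hv : P v then G ⟨v, hv⟩ else 0 := by
  split_ifs with hv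
  · refine (Finset.sum_eq_single (f := fun p => Finsupp.single p.1 (G p) v) ⟨v, hv⟩
      (fun p _ hp => Finsupp.single_eq_of_ne' fun hpv => hp (Subtype.ext hpv))
      (fun hvs => by rw [hG _ hvs, Finsupp.single_zero, Finsupp.zero_apply])).trans ?_
    exact Finsupp.single_eq_same
  · exact Finset.sum_eq_zero fun p _ =>
      Finsupp.single_eq_of_ne' fun hpv => hv (hpv ▸ p.2)

section ThinGenerators

variable {V : Type*} (W : Set V) (md : V → ℕ)

/-- The generators `v` (for `v ∉ W` or `md v > 1`) and `c_v` (for `v ∈ W`) of `P_T`. -/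
abbrev ThinGens : Type _ := {v : V // v ∉ W ∨ 1 < md v} ⊕ {v : V // v ∈ W}

def thinBase : ThinGens W md → V := Sum.elim Subtype.val Subtype.val

def thinWeight : ThinGens W md → ℕ := Sum.elim (fun _ => 1) fun p => md p.1

noncomputable def thinHeight (h : V → ℕ∞) : ThinGens W md → ℕ∞ :=
  Sum.elim (fun p => if p.1 ∈ W then (md p.1 : ℕ∞) else h p.1)
    (fun p => if md p.1 = 1 then h p.1 else edivE (h p.1) (md p.1))

lemma thinHeight_inr (h : V → ℕ∞) (p : {v : V // v ∈ W}) :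
    thinHeight W md h (.inr p) = edivE (h p.1) (md p.1) := by
  by_cases hp : md p.1 = 1 <;> simp [thinHeight, hp, edivE_one]

noncomputable def lowDigit (g : ThinGens W md →₀ ℕ) (v : V) : ℕ :=
  if hv : v ∉ W ∨ 1 < md v then g (.inl ⟨v, hv⟩) else 0

noncomputable def highDigit (g : ThinGens W md →₀ ℕ) (v : V) : ℕ :=
  if hv : v ∈ W then g (.inr ⟨v, hv⟩) else 0

lemma expandExp_thin_apply (g : ThinGens W md →₀ ℕ) (v : V) :
    expandExp (thinBase W md) (thinWeight W md) g v =
      lowDigit W md g v + highDigit W md g v * md v := by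
  rw [expandExp_apply, Finset.sum_sum_eq_sum_toLeft_add_sum_toRight]
  simp only [thinBase, thinWeight, Sum.elim_inl, Sum.elim_inr, mul_one]
  rw [Finset.sum_single_val_apply _ (fun p => g (.inl p)) fun p hp => ?_,
    Finset.sum_single_val_apply _ (fun p => g (.inr p) * md p.1) fun p hp => ?_]
  · rw [lowDigit, highDigit, dite_mul, zero_mul]
    congr
  · simp [Finsupp.notMem_support_iff.mp (Finset.mem_toRight.not.mp hp)]
  · exact Finsupp.notMem_support_iff.mp (Finset.mem_toLeft.not.mp hp)

noncomputable def splitExp (f : V →₀ ℕ) : ThinGens W md →₀ ℕ :=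
  Finsupp.onFinset ((f.support.subtype _).disjSum (f.support.subtype _))
    (Sum.elim (fun p => if p.1 ∈ W then f p.1 % md p.1 else f p.1) fun p => f p.1 / md p.1)
    (by
      rintro (p | p) hp <;>
      · have : f p.1 ≠ 0 := fun h0 => hp (by simp [h0])
        simpa using this)

lemma splitExp_inl (f : V →₀ ℕ) (p : {v : V // v ∉ W ∨ 1 < md v}) :
    splitExp W md f (.inl p) = if p.1 ∈ W then f p.1 % md p.1 else f p.1 := rfl

lemma splitExp_inr (f : V →₀ ℕ) (p : {v : V // v ∈ W}) :
    splitExp W md f (.inr p) = f p.1 / md p.1 := rfl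

variable {W md} {h : V → ℕ∞}

lemma restricted_splitExp (hdvd : ∀ v ∈ W, h v = ⊤ ∨ ∃ n : ℕ, h v = n ∧ md v ∣ n)
    {f : V →₀ ℕ} (hf : Restricted h f) : Restricted (thinHeight W md h) (splitExp W md f) := by
  rintro (p | p)
  · simp only [splitExp_inl, thinHeight, Sum.elim_inl]
    split_ifs with hp
    · have := p.2.resolve_left (not_not.mpr hp)
      exact_mod_cast Nat.mod_lt _ (by omega)
    · exact hf p.1
  · rw [splitExp_inr, thinHeight_inr]
    exact div_lt_edivE (hdvd p.1 p.2) (hf p.1)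

lemma lowDigit_lt (hmd : ∀ v ∈ W, 1 ≤ md v) {g : ThinGens W md →₀ ℕ}
    (hg : Restricted (thinHeight W md h) g) {v : V} (hv : v ∈ W) :
    lowDigit W md g v < md v := by
  rw [lowDigit]
  split_ifs with hv'
  · have := hg (.inl ⟨v, hv'⟩)
    simp only [thinHeight, Sum.elim_inl, if_pos hv] at this
    exact_mod_cast this
  · exact hmd v hv

lemma highDigit_lt {g : ThinGens W md →₀ ℕ} (hg : Restricted (thinHeight W md h) g) {v : V}
    (hv : v ∈ W) : (highDigit W md g v : ℕ∞) < edivE (h v) (md v) := by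
  simpa [highDigit, hv, thinHeight_inr] using hg (.inr ⟨v, hv⟩)

lemma restricted_expandExp (hmd : ∀ v ∈ W, 1 ≤ md v)
    (hdvd : ∀ v ∈ W, h v = ⊤ ∨ ∃ n : ℕ, h v = n ∧ md v ∣ n) {g : ThinGens W md →₀ ℕ}
    (hg : Restricted (thinHeight W md h) g) :
    Restricted h (expandExp (thinBase W md) (thinWeight W md) g) := by
  intro v
  rw [expandExp_thin_apply]
  by_cases hv : v ∈ W
  · exact add_mul_lt_of_lt_edivE (hdvd v hv) (lowDigit_lt hmd hg hv) (highDigit_lt hg hv)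
  · simpa [lowDigit, highDigit, hv, thinHeight] using hg (.inl ⟨v, Or.inl hv⟩)

lemma expandExp_splitExp (hmd : ∀ v ∈ W, 1 ≤ md v) (f : V →₀ ℕ) :
    expandExp (thinBase W md) (thinWeight W md) (splitExp W md f) = f := by
  ext v
  rw [expandExp_thin_apply]
  by_cases hv : v ∈ W
  · rcases (hmd v hv).lt_or_eq with hlt | heq
    · simp [lowDigit, highDigit, splitExp_inl, splitExp_inr, hv, hlt, Nat.mod_add_div']
    · simp [lowDigit, highDigit, splitExp_inr, hv, ← heq]
  · simp [lowDigit, highDigit, splitExp_inl, hv]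

lemma splitExp_expandExp (hmd : ∀ v ∈ W, 1 ≤ md v) {g : ThinGens W md →₀ ℕ}
    (hg : Restricted (thinHeight W md h) g) :
    splitExp W md (expandExp (thinBase W md) (thinWeight W md) g) = g := by
  ext (p | p)
  · rw [splitExp_inl, expandExp_thin_apply]
    split_ifs with hp
    · rw [Nat.add_mul_mod_self_right, Nat.mod_eq_of_lt (lowDigit_lt hmd hg hp)]
      simp [lowDigit, p.2]
    · simp [lowDigit, highDigit, hp]
  · rw [splitExp_inr, expandExp_thin_apply, Nat.add_mul_div_right _ _ (hmd p.1 p.2),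
      Nat.div_eq_of_lt (lowDigit_lt hmd hg p.2), zero_add]
    simp [highDigit, p.2]

lemma bijOn_expandExp_thin (hmd : ∀ v ∈ W, 1 ≤ md v)
    (hdvd : ∀ v ∈ W, h v = ⊤ ∨ ∃ n : ℕ, h v = n ∧ md v ∣ n) :
    Set.BijOn (expandExp (thinBase W md) (thinWeight W md))
      {g | Restricted (thinHeight W md h) g} {f | Restricted h f} :=
  Set.InvOn.bijOn ⟨fun _ hg => splitExp_expandExp hmd hg, fun f _ => expandExp_splitExp hmd f⟩
    (fun _ hg => restricted_expandExp hmd hdvd hg) (fun _ hf => restricted_splitExp hdvd hf)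

variable (W md)

lemma injective_thinBase_isLeft :
    Function.Injective fun x : ThinGens W md => toLex (thinBase W md x, x.isLeft) := by
  rintro (p | p) (q | q) hpq <;> simp_all [thinBase, Subtype.ext_iff]

variable [LinearOrder V]

/-- `c_v` comes right before `v`, since `false < true`. -/
abbrev thinOrder : LinearOrder (ThinGens W md) :=
  LinearOrder.lift' _ (injective_thinBase_isLeft W md)

lemma thinOrder_lt_iff (x y : ThinGens W md) : (thinOrder W md).lt x y ↔
    toLex (thinBase W md x, x.isLeft) < toLex (thinBase W md y, y.isLeft) := Iff.rfl

lemma thinOrder_lt_inl_inl (v w : {v : V // v ∉ W ∨ 1 < md v}) :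
    (thinOrder W md).lt (.inl v) (.inl w) ↔ v.1 < w.1 := by
  rw [thinOrder_lt_iff]
  simp [Prod.Lex.toLex_lt_toLex, thinBase]

lemma thinOrder_lt_inr_inr (v w : {v : V // v ∈ W}) :
    (thinOrder W md).lt (.inr v) (.inr w) ↔ v.1 < w.1 := by
  rw [thinOrder_lt_iff]
  simp [Prod.Lex.toLex_lt_toLex, thinBase]

lemma thinOrder_lt_inr_inl (v : {v : V // v ∈ W}) (w : {v : V // v ∉ W ∨ 1 < md v}) :
    (thinOrder W md).lt (.inr v) (.inl w) ↔ v.1 ≤ w.1 := by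
  rw [thinOrder_lt_iff]
  simp [Prod.Lex.toLex_lt_toLex, thinBase, le_iff_lt_or_eq]

lemma monotone_thinBase : @Monotone _ _ (thinOrder W md).toPreorder _ (thinBase W md) :=
  fun x y => Prod.Lex.monotone_fst (toLex (thinBase W md x, x.isLeft))
    (toLex (thinBase W md y, y.isLeft))

end ThinGenerators

lemma sub_pow_mem_spanBelow_of_thin {k S J V : Type*} [Field k] [Ring S] [Algebra k S]
    [LinearOrder V] {h : V → ℕ∞} {emb : V → S} {ord : List V → List V → Prop}
    {B : Module.Basis (J × {f : V →₀ ℕ // Restricted h f}) k S} {W : Set V} {md : V → ℕ}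
    {c : V → S} (hc : ∀ v ∈ W, c v - emb v ^ md v ∈ Submodule.span k
      {y | ∃ p : J × {f : V →₀ ℕ // Restricted h f},
        ord (toWord (p.2 : V →₀ ℕ)) (List.replicate (md v) v) ∧ y = B p})
    (x : ThinGens W md) :
    Sum.elim (fun p => emb p.1) (fun p => c p.1) x -
        emb (thinBase W md x) ^ thinWeight W md x ∈
      B.spanBelow pbwWord ord (List.replicate (thinWeight W md x) (thinBase W md x)) := by
  rcases x with p | p
  · simp [thinBase, thinWeight]
  · show c p.1 - emb p.1 ^ md p.1 ∈
      Submodule.span k (B '' {q | ord (pbwWord q) (List.replicate (md p.1) p.1)})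
    convert hc p.1 p.2 using 2
    ext y
    constructor <;> rintro ⟨q, hq, rfl⟩ <;> exact ⟨q, hq, rfl⟩

theorem pbw_replacement_by_thin_elements_general
    {k S J V : Type*} [Field k] [Ring S] [Algebra k S] [LinearOrder V]
    (a : J → S) (emb : V → S) (h : V → ℕ∞)
    (B : Module.Basis (J × {f : V →₀ ℕ // Restricted h f}) k S)
    (hB : ∀ p, B p = pbwFam a emb h p)
    (ord : List V → List V → Prop)
    (hordTri : ∀ u v, ord u v ∨ u = v ∨ ord v u)
    (hordWF : WellFounded ord)
    (hordMon : ∀ u v c d : List V, ord u v → ord (c ++ u ++ d) (c ++ v ++ d))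
    (hcompat : ∀ (l : List (J ⊕ V)) (m : List V),
      IsLeadingWord ord B ((l.map (Sum.elim a emb)).prod) m →
      ¬ ord (l.filterMap fun x => x.elim (fun _ => none) some) m)
    (W : Set V) (c : V → S) (md : V → ℕ)
    (hthin : ∀ v ∈ W, 1 ≤ md v ∧ (md v : ℕ∞) < h v ∧
      (h v = ⊤ ∨ ∃ n : ℕ, h v = (n : ℕ∞) ∧ md v ∣ n) ∧
      c v - emb v ^ md v ∈ Submodule.span k
        {y | ∃ p : J × {f : V →₀ ℕ // Restricted h f},
          ord (toWord (p.2 : V →₀ ℕ)) (List.replicate (md v) v) ∧ y = B p}) :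
    ∃ li : LinearOrder ({v : V // v ∉ W ∨ 1 < md v} ⊕ {v : V // v ∈ W}),
      (∀ v w : {v : V // v ∉ W ∨ 1 < md v}, li.lt (Sum.inl v) (Sum.inl w) ↔ v.1 < w.1) ∧
      (∀ v w : {v : V // v ∈ W}, li.lt (Sum.inr v) (Sum.inr w) ↔ v.1 < w.1) ∧
      (∀ (v : {v : V // v ∈ W}) (w : {v : V // v ∉ W ∨ 1 < md v}),
        li.lt (Sum.inr v) (Sum.inl w) ↔ v.1 ≤ w.1) ∧
      @IsPBWBasis k S J ({v : V // v ∉ W ∨ 1 < md v} ⊕ {v : V // v ∈ W}) _ _ _ li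
        a
        (Sum.elim (fun p => emb p.1) (fun p => c p.1))
        (Sum.elim (fun p => if p.1 ∈ W then (md p.1 : ℕ∞) else h p.1)
          (fun p => if md p.1 = 1 then h p.1 else edivE (h p.1) (md p.1))) := by
  have : IsWellOrder (List V) ord :=
    { wf := hordWF
      trichotomous := fun u v huv hvu => ((hordTri u v).resolve_left huv).resolve_right hvu }
  refine ⟨thinOrder W md, thinOrder_lt_inl_inl W md, thinOrder_lt_inr_inr W md,
    thinOrder_lt_inr_inl W md, ?_⟩
  let := thinOrder W md
  exact isPBWBasis_of_bijOn_expandExp hcompat hB hordMon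
    (sub_pow_mem_spanBelow_of_thin fun v hv => (hthin v hv).2.2.2) (monotone_thinBase W md)
    (bijOn_expandExp_thin (fun v hv => (hthin v hv).1) fun v hv => (hthin v hv).2.2.1)

/-- Replacement of PBW-generators by thin elements: given a set of PBW-generators `V`
of `S` over `A` (with `1 = a j₀` among the basis of `A`), a complete monoidal order
`ord` on words in `V` compatible with the PBW-decomposition, and a set `T` of thin
elements `c v = v^{m_v} + (ord-smaller terms)` for `v ∈ W` with `m_v` dividing the
height of `v` (or `h v = ∞`), the set `P_T` — consisting of the elements `c v` for
`v ∈ W` together with the generators `v` with `v ∉ W` or `m_v > 1`, with the heights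
`h_{P_T}(v) = m_v` (for `v ∈ W`, `m_v > 1`), `h_{P_T}(c v) = h(v)/m_v`, ordered so
that `c v` precedes `v` and otherwise order is inherited from `V` — is again a set of
PBW-generators of `S` over `A`. -/
theorem pbw_replacement_by_thin_elements
    {k S J V : Type*} [Field k] [Ring S] [Algebra k S] [LinearOrder V]
    (a : J → S) (emb : V → S) (h : V → ℕ∞)
    (B : Module.Basis (J × {f : V →₀ ℕ // Restricted h f}) k S)
    (hB : ∀ p, B p = pbwFam a emb h p)
    (j₀ : J) (hj₀ : a j₀ = 1)
    (ord : List V → List V → Prop)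
    (hordTrans : ∀ u v w, ord u v → ord v w → ord u w)
    (hordTri : ∀ u v, ord u v ∨ u = v ∨ ord v u)
    (hordWF : WellFounded ord)
    (hordMon : ∀ u v c d : List V, ord u v → ord (c ++ u ++ d) (c ++ v ++ d))
    (hcompat : ∀ (l : List (J ⊕ V)) (m : List V),
      IsLeadingWord ord B ((l.map (Sum.elim a emb)).prod) m →
      ¬ ord (l.filterMap fun x => x.elim (fun _ => none) some) m)
    (W : Set V) (c : V → S) (md : V → ℕ)
    (hthin : ∀ v ∈ W, 1 ≤ md v ∧ (md v : ℕ∞) < h v ∧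
      (h v = ⊤ ∨ ∃ n : ℕ, h v = (n : ℕ∞) ∧ md v ∣ n) ∧
      c v - emb v ^ md v ∈ Submodule.span k
        {y | ∃ p : J × {f : V →₀ ℕ // Restricted h f},
          ord (toWord (p.2 : V →₀ ℕ)) (List.replicate (md v) v) ∧ y = B p}) :
    ∃ li : LinearOrder ({v : V // v ∉ W ∨ 1 < md v} ⊕ {v : V // v ∈ W}),
      (∀ v w : {v : V // v ∉ W ∨ 1 < md v}, li.lt (Sum.inl v) (Sum.inl w) ↔ v.1 < w.1) ∧
      (∀ v w : {v : V // v ∈ W}, li.lt (Sum.inr v) (Sum.inr w) ↔ v.1 < w.1) ∧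
      (∀ (v : {v : V // v ∈ W}) (w : {v : V // v ∉ W ∨ 1 < md v}),
        li.lt (Sum.inr v) (Sum.inl w) ↔ v.1 ≤ w.1) ∧
      @IsPBWBasis k S J ({v : V // v ∉ W ∨ 1 < md v} ⊕ {v : V // v ∈ W}) _ _ _ li
        a
        (Sum.elim (fun p => emb p.1) (fun p => c p.1))
        (Sum.elim (fun p => if p.1 ∈ W then (md p.1 : ℕ∞) else h p.1)
          (fun p => if md p.1 = 1 then h p.1 else edivE (h p.1) (md p.1))) :=
  pbw_replacement_by_thin_elements_general a emb h B hB ord hordTri hordWF hordMon hcompat W c md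
    hthin
end
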